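/- arXiv:2103.06962 — 2 statements merged into one kernel-verified Lean document; each statement's English description precedes it below -/
import Mathlib

section
/- Let A ∈ ℝ^{n×n} and b ∈ ℝⁿ, and for j ≥ 1 let C_j(A,b) = [b, Ab, ..., A^{j−1}b] be the truncated controllability matrix. Then every block of j consecutive columns of C_t(A,b) (for t ≥ j) equals A^i C_j(A,b) for some i ≥ 0; consequently, if A is k-positive and the compounds (C_j(A,b))_[j] ≥ 0 for 1 ≤ j ≤ k, then all consecutive j-minors of C_t(A,b) are nonnegative for all 1 ≤ j ≤ k and t ≥ j. -/
/-
The block of `j` consecutive columns of `C_t(A,b)` starting at column `i` is `A^i C_j(A,b)`,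
since `A^(i+q) b = A^i (A^q b)`. A consecutive `j × j` minor of `C_t(A,b)` is therefore an
entry of the `j`-th compound of `A^i C_j(A,b)`. By Cauchy–Binet taking compounds is
multiplicative, so this compound is `(A_[j])^i (C_j(A,b))_[j]`, a product of entrywise
nonnegative matrices.
-/

open Matrix BigOperators

/-- The `r`-th multiplicative compound matrix. -/
def compound {R : Type*} [CommRing R] {n m : ℕ} (X : Matrix (Fin n) (Fin m) R) (r : ℕ) :
    Matrix {s : Finset (Fin n) // s.card = r} {s : Finset (Fin m) // s.card = r} R :=
  fun I J => (X.submatrix (I.1.orderEmbOfFin I.2) (J.1.orderEmbOfFin J.2)).det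

/-- The truncated controllability matrix `C_j(A,b) = [b, Ab, …, A^{j−1} b]`. -/
def ctrb {n : ℕ} (A : Matrix (Fin n) (Fin n) ℝ) (b : Fin n → ℝ) (j : ℕ) :
    Matrix (Fin n) (Fin j) ℝ :=
  fun i q => (A ^ (q : ℕ)).mulVec b i

open Finset

section CauchyBinet

variable {R : Type*} [CommRing R] {ι : Type*} [Fintype ι]

theorem Matrix.det_mul_eq_sum_prod_mul_det_submatrix {m : Type*} [Fintype m] [DecidableEq m]
    (M : Matrix m ι R) (N : Matrix ι m R) :
    (M * N).det = ∑ f : m → ι, (∏ p, M p (f p)) * (N.submatrix f id).det := by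
  have hrows : M * N = fun p => ∑ l, M p l • N l := by
    ext p q
    simp [mul_apply]
  calc (M * N).det = detRowAlternating (fun p => ∑ l, M p l • N l) := by rw [← hrows]; rfl
    _ = ∑ f : m → ι, detRowAlternating (fun p => M p (f p) • N (f p)) :=
      detRowAlternating.toMultilinearMap.map_sum fun p l => M p l • N l
    _ = ∑ f : m → ι, (∏ p, M p (f p)) * (N.submatrix f id).det :=
      sum_congr rfl fun f _ => detRowAlternating.map_smul_univ _ _

variable [LinearOrder ι] {j : ℕ}

theorem sum_injective_eq_sum_sum_orderEmbOfFin_comp_perm {M : Type*} [AddCommMonoid M]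
    (F : (Fin j → ι) → M) :
    ∑ f with Function.Injective f, F f =
      ∑ S : {s : Finset ι // s.card = j}, ∑ σ : Equiv.Perm (Fin j),
        F (S.1.orderEmbOfFin S.2 ∘ σ) := by
  rw [← Fintype.sum_prod_type']
  symm
  refine sum_bij (fun x _ => x.1.1.orderEmbOfFin x.1.2 ∘ x.2) ?_ ?_ ?_ fun _ _ => rfl
  · intro x _
    simpa using (x.1.1.orderEmbOfFin x.1.2).injective.comp x.2.injective
  · rintro ⟨S, σ⟩ _ ⟨T, τ⟩ _ h
    have hST : S = T := Subtype.ext <| coe_inj.mp <| by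
      simpa [Set.range_comp, σ.surjective.range_comp, τ.surjective.range_comp]
        using congrArg Set.range h
    subst hST
    simp only [Prod.mk.injEq, true_and]
    ext p
    exact congrArg Fin.val ((S.1.orderEmbOfFin S.2).injective (congrFun h p))
  · intro f hf
    rw [mem_filter_univ] at hf
    have hS : (univ.image f).card = j := by simp [card_image_of_injective _ hf]
    let e := (univ.image f).orderIsoOfFin hS
    let σ : Fin j → Fin j := fun p => e.symm ⟨f p, mem_image_of_mem f (mem_univ p)⟩
    have hσ : ∀ p, (univ.image f).orderEmbOfFin hS (σ p) = f p := fun p => by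
      simp [σ, e, ← coe_orderIsoOfFin_apply]
    have hσinj : Function.Injective σ := fun p q hpq => hf (by rw [← hσ p, ← hσ q, hpq])
    exact ⟨(⟨_, hS⟩, Equiv.ofBijective σ (Finite.injective_iff_bijective.mp hσinj)),
      mem_univ _, funext hσ⟩

theorem Matrix.det_mul_eq_sum_det_submatrix_mul_det_submatrix
    (M : Matrix (Fin j) ι R) (N : Matrix ι (Fin j) R) :
    (M * N).det = ∑ S : {s : Finset ι // s.card = j},
      (M.submatrix id (S.1.orderEmbOfFin S.2)).det *
        (N.submatrix (S.1.orderEmbOfFin S.2) id).det := by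
  have hnoninj : ∀ f : Fin j → ι, ¬ Function.Injective f → (N.submatrix f id).det = 0 := by
    intro f hf
    obtain ⟨p, q, hfpq, hpq⟩ := Function.not_injective_iff.mp hf
    exact det_zero_of_row_eq hpq (by ext; simp [hfpq])
  rw [M.det_mul_eq_sum_prod_mul_det_submatrix, ← sum_filter_of_ne fun f _ h =>
      by_contra fun hf => h (by rw [hnoninj f hf, mul_zero]),
    sum_injective_eq_sum_sum_orderEmbOfFin_comp_perm]
  refine sum_congr rfl fun S _ => ?_
  rw [← det_transpose, det_apply', sum_mul]
  refine sum_congr rfl fun σ _ => ?_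
  have hperm : N.submatrix (S.1.orderEmbOfFin S.2 ∘ σ) id =
      (N.submatrix (S.1.orderEmbOfFin S.2) id).submatrix σ id := rfl
  rw [hperm, det_permute]
  simp only [transpose_apply, submatrix_apply, id, Function.comp_apply]
  ring

end CauchyBinet

section Compound

variable {R : Type*} [CommRing R]

theorem compound_mul {l m n : ℕ} (X : Matrix (Fin l) (Fin m) R) (Y : Matrix (Fin m) (Fin n) R)
    (r : ℕ) : compound (X * Y) r = compound X r * compound Y r := by
  ext I J
  rw [compound, submatrix_mul _ _ _ id _ Function.bijective_id,
    det_mul_eq_sum_det_submatrix_mul_det_submatrix]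
  rfl

theorem compound_one {n : ℕ} (r : ℕ) : compound (1 : Matrix (Fin n) (Fin n) R) r = 1 := by
  ext I J
  by_cases hIJ : I = J
  · subst hIJ
    rw [compound, submatrix_one _ (I.1.orderEmbOfFin I.2).injective, det_one, one_apply_eq]
  · obtain ⟨x, hxJ, hxI⟩ : ∃ x ∈ J.1, x ∉ I.1 := by
      by_contra! h
      exact hIJ (Subtype.ext (eq_of_subset_of_card_le h (by rw [I.2, J.2])).symm)
    obtain ⟨q, rfl⟩ : x ∈ Set.range (J.1.orderEmbOfFin J.2) := by
      rwa [range_orderEmbOfFin]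
    rw [one_apply_ne hIJ]
    refine det_eq_zero_of_column_eq_zero q fun p => one_apply_ne ?_
    exact fun h => hxI (h ▸ orderEmbOfFin_mem I.1 I.2 p)

theorem compound_pow {n : ℕ} (A : Matrix (Fin n) (Fin n) R) (r i : ℕ) :
    compound (A ^ i) r = compound A r ^ i := by
  induction i with
  | zero => rw [pow_zero, pow_zero, compound_one]
  | succ i ih => rw [pow_succ, pow_succ, compound_mul, ih]

theorem exists_compound_eq_det_submatrix {m n r : ℕ} (X : Matrix (Fin m) (Fin n) R)
    {f : Fin r → Fin m} {g : Fin r → Fin n} (hf : StrictMono f) (hg : StrictMono g) :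
    ∃ I J, compound X r I J = (X.submatrix f g).det := by
  have hfc : (univ.image f).card = r := by simp [card_image_of_injective _ hf.injective]
  have hgc : (univ.image g).card = r := by simp [card_image_of_injective _ hg.injective]
  refine ⟨⟨_, hfc⟩, ⟨_, hgc⟩, ?_⟩
  rw [compound, ← orderEmbOfFin_unique hfc (fun p => mem_image_of_mem f (mem_univ p)) hf,
    ← orderEmbOfFin_unique hgc (fun p => mem_image_of_mem g (mem_univ p)) hg]

end Compound

theorem Matrix.mul_apply_nonneg {α : Type*} [Semiring α] [PartialOrder α] [IsOrderedRing α]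
    {l m n : Type*} [Fintype m] {M : Matrix l m α} {N : Matrix m n α}
    (hM : ∀ i k, 0 ≤ M i k) (hN : ∀ k j, 0 ≤ N k j) (i : l) (j : n) : 0 ≤ (M * N) i j :=
  sum_nonneg fun k _ => mul_nonneg (hM i k) (hN k j)

theorem pow_mul_ctrb_apply {n : ℕ} (A : Matrix (Fin n) (Fin n) ℝ) (b : Fin n → ℝ) {i j t : ℕ}
    (p : Fin n) (q : Fin j) (h : i + q < t) :
    (A ^ i * ctrb A b j) p q = ctrb A b t p ⟨i + q, h⟩ := by
  simp only [ctrb, pow_add, ← mulVec_mulVec]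
  rfl

/-- Every block of `j` consecutive columns of `C_t(A,b)` equals `A^i C_j(A,b)`;
consequently, if `A` is `k`-positive and `(C_j(A,b))_[j] ≥ 0` for `1 ≤ j ≤ k`, then all
consecutive `j`-minors of `C_t(A,b)` are nonnegative for `1 ≤ j ≤ k` and `t ≥ j`. -/
theorem ctrb_consecutive_cols_and_minors {n : ℕ} (k : ℕ)
    (A : Matrix (Fin n) (Fin n) ℝ) (b : Fin n → ℝ)
    (hA : ∀ j, 1 ≤ j → j ≤ k → ∀ I J, 0 ≤ compound A j I J)
    (hC : ∀ j, 1 ≤ j → j ≤ k → ∀ I J, 0 ≤ compound (ctrb A b j) j I J) :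
    (∀ t j i : ℕ, ∀ (h : i + j ≤ t),
      (fun (p : Fin n) (q : Fin j) => ctrb A b t p (⟨i + q.1, by omega⟩ : Fin t)) =
        (A ^ i) * ctrb A b j) ∧
    (∀ j t, 1 ≤ j → j ≤ k → j ≤ t → ∀ a i : ℕ, ∀ (ha : a + j ≤ n) (hi : i + j ≤ t),
      0 ≤ ((ctrb A b t).submatrix (fun s : Fin j => (⟨a + s.1, by omega⟩ : Fin n))
        (fun s : Fin j => (⟨i + s.1, by omega⟩ : Fin t))).det) := by
  refine ⟨fun t j i h => ?_, fun j t hj hjk _ a i ha hi => ?_⟩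
  · ext p q
    exact (pow_mul_ctrb_apply A b p q _).symm
  · set rows : Fin j → Fin n := fun s => ⟨a + s.1, by omega⟩
    have hrows : StrictMono rows := fun _ _ hst => Nat.add_lt_add_left hst a
    have hminor : (ctrb A b t).submatrix rows (fun s : Fin j => ⟨i + s.1, by omega⟩) =
        (A ^ i * ctrb A b j).submatrix rows id := by
      ext p q
      exact (pow_mul_ctrb_apply A b _ q _).symm
    obtain ⟨I, J, hIJ⟩ :=
      exists_compound_eq_det_submatrix (A ^ i * ctrb A b j) hrows strictMono_id
    rw [hminor, ← hIJ, compound_mul, compound_pow]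
    exact mul_apply_nonneg (pow_apply_nonneg (hA j hj hjk) i) (hC j hj hjk) I J
end

section
/- A transfer function G(z) = Σ_{i=1}^{n} rᵢ/(z − pᵢ) with distinct nonnegative poles pᵢ ≥ 0 and positive residues rᵢ > 0 admits a minimal symmetric realization (A, b, bᵀ) with A = diag(pₙ, …, p₁) and bᵢ = √(r_{n−i+1}); for this realization, A is totally positive and the truncated controllability matrices C_j(A,b) = [b, Ab, …, A^{j−1}b] coincide with (generalized Vandermonde-type) totally positive matrices for all j ≥ 1, provided p_n < p_{n-1} < ... < p_1. -/
/-!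
For `A = diag(d)` the `q`-th column of `C_j(A, b)` is `(bᵢ dᵢ^q)ᵢ`, so every minor of `C_j(A, b)`
is a product of entries of `b` times a generalized Vandermonde determinant `det (x_a ^ e_c)` with
increasing nodes and increasing exponents. Such a determinant is positive when the nodes are
positive: expanding along the last row, it is the value at the largest node of a polynomial with
at most `m` monomials whose leading coefficient is the analogous `(m-1)`-determinant, positive by
induction, and which vanishes at the `m - 1` smaller nodes. Descartes' rule of signs forbids any
further positive root, so the polynomial stays positive beyond them. A zero node is reached by
continuity. Minors of a nonnegative diagonal matrix are products of diagonal entries or zero.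
-/

open Matrix BigOperators

open Polynomial Finset

namespace Polynomial

theorem signVariations_lt_card_support {R : Type*} [Semiring R] [LinearOrder R] {P : R[X]}
    (hP : P ≠ 0) : P.signVariations < #P.support := by
  induction hn : #P.support generalizing P with
  | zero => exact absurd (card_support_eq_zero.1 hn) hP
  | succ n ih =>
    by_cases hE : P.eraseLead = 0
    · have hmono : P = monomial P.natDegree P.leadingCoeff := by
        simpa [hE] using (eraseLead_add_monomial_natDegree_leadingCoeff P).symm
      rw [hmono, signVariations_monomial]
      omega
    · have := ih hE (card_support_eraseLead' hn)
      have := signVariations_le_eraseLead_succ P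
      omega

theorem card_le_roots_countP {R : Type*} [CommRing R] [IsDomain R] {P : R[X]} (hP : P ≠ 0)
    (q : R → Prop) [DecidablePred q] {s : Finset R} (hs : ∀ x ∈ s, q x ∧ P.IsRoot x) :
    #s ≤ P.roots.countP q := by
  have hle : s.val ≤ P.roots :=
    (Multiset.le_iff_subset s.nodup).2 fun x hx => (mem_roots hP).2 (hs x hx).2
  calc #s = s.val.countP q := (Multiset.countP_eq_card.2 fun x hx => (hs x hx).1).symm
    _ ≤ P.roots.countP q := Multiset.countP_le_of_le q hle

theorem card_lt_card_support_of_forall_pos_isRoot {R : Type*} [CommRing R] [LinearOrder R]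
    [IsStrictOrderedRing R] {P : R[X]} (hP : P ≠ 0) {s : Finset R}
    (hs : ∀ x ∈ s, 0 < x ∧ P.IsRoot x) : #s < #P.support :=
  ((card_le_roots_countP hP _ hs).trans P.roots_countP_pos_le_signVariations).trans_lt
    (signVariations_lt_card_support hP)

theorem eval_ne_zero_of_card_support_le {R : Type*} [CommRing R] [LinearOrder R]
    [IsStrictOrderedRing R] {P : R[X]} (hP : P ≠ 0) {s : Finset R}
    (hs : ∀ x ∈ s, 0 < x ∧ P.IsRoot x) (hcard : #P.support ≤ #s + 1) {t : R} (ht : 0 < t)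
    (hts : t ∉ s) : P.eval t ≠ 0 := fun h0 => by
  have := card_lt_card_support_of_forall_pos_isRoot hP (s := insert t s) <| by
    simpa [ht, h0] using hs
  rw [card_insert_of_notMem hts] at this
  omega

theorem eval_pos_of_leadingCoeff_pos {P : ℝ[X]} {a : ℝ} (hlc : 0 < P.leadingCoeff)
    (hP : ∀ t, a ≤ t → P.eval t ≠ 0) : 0 < P.eval a := by
  rcases le_or_gt P.degree 0 with hdeg | hdeg
  · have hnat := natDegree_eq_zero_iff_degree_le_zero.2 hdeg
    rw [eq_C_of_natDegree_eq_zero hnat, eval_C]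
    rwa [leadingCoeff, hnat] at hlc
  · have hP_top := tendsto_atTop_of_leadingCoeff_nonneg P hdeg hlc.le
    obtain ⟨T, hT, haT⟩ :=
      ((hP_top.eventually_gt_atTop 0).and (Filter.eventually_ge_atTop a)).exists
    by_contra! ha
    obtain ⟨c, hc, hc0⟩ := intermediate_value_Icc haT P.continuous.continuousOn ⟨ha, hT.le⟩
    exact hP c hc.1 hc0

theorem card_support_sum_monomial_le {R ι : Type*} [Semiring R] (s : Finset ι) (e : ι → ℕ)
    (c : ι → R) : #(∑ i ∈ s, monomial (e i) (c i)).support ≤ #s := by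
  classical
  refine (card_le_card (t := s.image e) fun k hk => ?_).trans card_image_le
  by_contra hks
  refine mem_support_iff.1 hk ?_
  rw [finsetSum_coeff]
  refine sum_eq_zero fun i hi => coeff_monomial_of_ne _ ?_
  exact fun h => hks (mem_image.2 ⟨i, hi, h.symm⟩)

theorem coeff_sum_monomial_of_injective {R ι : Type*} [Semiring R] [Fintype ι] {e : ι → ℕ}
    (he : Function.Injective e) (c : ι → R) (j : ι) :
    (∑ i, monomial (e i) (c i)).coeff (e j) = c j := by
  rw [finsetSum_coeff, sum_eq_single j, coeff_monomial_same]
  · exact fun i _ hij => coeff_monomial_of_ne _ (he.ne hij.symm)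
  · simp

theorem leadingCoeff_sum_monomial {R : Type*} [Semiring R] {m : ℕ} {e : Fin (m + 1) → ℕ}
    (he : StrictMono e) {c : Fin (m + 1) → R} (hc : c (Fin.last m) ≠ 0) :
    (∑ i, monomial (e i) (c i)).leadingCoeff = c (Fin.last m) := by
  have hcoeff := coeff_sum_monomial_of_injective he.injective c (Fin.last m)
  have hdeg : (∑ i, monomial (e i) (c i)).natDegree ≤ e (Fin.last m) :=
    natDegree_sum_le_of_forall_le _ _ fun i _ =>
      (natDegree_monomial_le _).trans (he.monotone (Fin.le_last i))
  rw [leadingCoeff, natDegree_eq_of_le_of_coeff_ne_zero hdeg (hcoeff ▸ hc), hcoeff]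

end Polynomial

namespace Matrix

def genVandermonde {R ι κ : Type*} [Monoid R] (x : ι → R) (e : κ → ℕ) : Matrix ι κ R :=
  of fun i j => x i ^ e j

theorem det_genVandermonde_update_last {R : Type*} [CommRing R] {m : ℕ} (x : Fin (m + 1) → R)
    (e : Fin (m + 1) → ℕ) (t : R) :
    (genVandermonde (Function.update x (Fin.last m) t) e).det =
      ∑ j, t ^ e j * ((-1) ^ (m + j : ℕ) *
        (genVandermonde (x ∘ Fin.castSucc) (e ∘ j.succAbove)).det) := by
  rw [det_succ_row _ (Fin.last m)]
  refine sum_congr rfl fun j _ => ?_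
  have hminor : (genVandermonde (Function.update x (Fin.last m) t) e).submatrix
      (Fin.last m).succAbove j.succAbove =
        genVandermonde (x ∘ Fin.castSucc) (e ∘ j.succAbove) := by
    ext a b
    simp [genVandermonde]
  have hentry : genVandermonde (Function.update x (Fin.last m) t) e (Fin.last m) j = t ^ e j := by
    simp [genVandermonde]
  rw [hminor, hentry, Fin.val_last]
  ring

theorem det_genVandermonde_eq_zero_of_eq {R ι : Type*} [CommRing R] [Fintype ι] [DecidableEq ι]
    {x : ι → R} (e : ι → ℕ) {i j : ι} (hij : i ≠ j) (h : x i = x j) :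
    (genVandermonde x e).det = 0 :=
  det_zero_of_row_eq hij (funext fun k => by simp [genVandermonde, h])

theorem det_genVandermonde_pos {m : ℕ} {x : Fin m → ℝ} {e : Fin m → ℕ} (hx : StrictMono x)
    (hx0 : ∀ i, 0 < x i) (he : StrictMono e) : 0 < (genVandermonde x e).det := by
  induction m with
  | zero => simp
  | succ m ih =>
    set c : Fin (m + 1) → ℝ := fun j => (-1) ^ (m + j : ℕ) *
      (genVandermonde (x ∘ Fin.castSucc) (e ∘ j.succAbove)).det
    set P : ℝ[X] := ∑ j, monomial (e j) (c j)
    have hP_eval (t : ℝ) :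
        P.eval t = (genVandermonde (Function.update x (Fin.last m) t) e).det := by
      simp [P, eval_finsetSum, det_genVandermonde_update_last, c, mul_comm]
    have hc_last : 0 < c (Fin.last m) := by
      have := ih (hx.comp Fin.strictMono_castSucc) (fun i => hx0 _)
        (he.comp Fin.strictMono_castSucc)
      simpa [c, ← two_mul, pow_mul] using this
    have hP_coeff : P.coeff (e (Fin.last m)) = c (Fin.last m) :=
      coeff_sum_monomial_of_injective he.injective c (Fin.last m)
    have hP_ne : P ≠ 0 := fun h => hc_last.ne' <| by rw [← hP_coeff, h, coeff_zero]
    have hP_no_roots (t : ℝ) (ht : x (Fin.last m) ≤ t) : P.eval t ≠ 0 := by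
      refine eval_ne_zero_of_card_support_le hP_ne (s := univ.image (x ∘ Fin.castSucc)) ?_ ?_
        ((hx0 _).trans_le ht) ?_
      · simp only [mem_image, mem_univ, true_and, Function.comp_apply]
        rintro y ⟨a, rfl⟩
        refine ⟨hx0 _, ?_⟩
        rw [IsRoot, hP_eval]
        exact det_genVandermonde_eq_zero_of_eq e (Fin.castSucc_lt_last a).ne (by simp)
      · rw [card_image_of_injective _ (hx.injective.comp (Fin.castSucc_injective m))]
        simpa using card_support_sum_monomial_le univ e c
      · simpa using fun a => ((hx (Fin.castSucc_lt_last a)).trans_le ht).ne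
    have := eval_pos_of_leadingCoeff_pos (leadingCoeff_sum_monomial he hc_last.ne' ▸ hc_last)
      hP_no_roots
    rwa [hP_eval, Function.update_eq_self] at this

theorem det_genVandermonde_nonneg {m : ℕ} {x : Fin m → ℝ} {e : Fin m → ℕ} (hx : StrictMono x)
    (hx0 : ∀ i, 0 ≤ x i) (he : StrictMono e) : 0 ≤ (genVandermonde x e).det := by
  have hcont : Continuous fun ε : ℝ => (genVandermonde (fun i => x i + ε) e).det := by
    unfold genVandermonde; fun_prop
  refine ge_of_tendsto ((hcont.tendsto' 0 _ (by simp)).mono_left nhdsWithin_le_nhds)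
    (eventually_nhdsWithin_of_forall (s := Set.Ioi 0) fun ε hε => ?_)
  exact (det_genVandermonde_pos (hx.add_const ε)
    (fun i => add_pos_of_nonneg_of_pos (hx0 i) hε) he).le

end Matrix

theorem dotProduct_diagonal_pow_mulVec {R ι : Type*} [CommSemiring R] [Fintype ι]
    [DecidableEq ι] (d b : ι → R) (t : ℕ) :
    b ⬝ᵥ (diagonal d ^ t) *ᵥ b = ∑ i, b i ^ 2 * d i ^ t := by
  simp only [diagonal_pow, mulVec_diagonal, dotProduct, Pi.pow_apply]
  exact sum_congr rfl fun i _ => by ring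

theorem ctrb_diagonal {n : ℕ} (d b : Fin n → ℝ) (j : ℕ) :
    ctrb (diagonal d) b j =
      of fun i q => b i * genVandermonde d (fun q : Fin j => (q : ℕ)) i q := by
  ext i q
  simp [ctrb, diagonal_pow, mulVec_diagonal, genVandermonde, mul_comm]

theorem rank_ctrb_diagonal {n : ℕ} {d b : Fin n → ℝ} (hd : Function.Injective d)
    (hb : ∀ i, b i ≠ 0) : (ctrb (diagonal d) b n).rank = n := by
  have hdet : (ctrb (diagonal d) b n).det ≠ 0 := by
    rw [ctrb_diagonal, det_mul_column]
    exact mul_ne_zero (prod_ne_zero_iff.2 fun i _ => hb i) (det_vandermonde_ne_zero_iff.2 hd)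
  rw [rank_of_isUnit _ ((isUnit_iff_isUnit_det _).2 hdet.isUnit), Fintype.card_fin]

theorem compound_diagonal_nonneg {R : Type*} [CommRing R] [LinearOrder R]
    [IsStrictOrderedRing R] {n : ℕ} {d : Fin n → R} (hd : ∀ i, 0 ≤ d i) (r : ℕ) (I J) :
    0 ≤ compound (diagonal d) r I J := by
  by_cases hIJ : I = J
  · subst hIJ
    rw [compound, submatrix_diagonal _ _ (I.1.orderEmbOfFin I.2).injective, det_diagonal]
    exact prod_nonneg fun a _ => hd _
  · obtain ⟨i, hiI, hiJ⟩ := not_subset.1 fun h =>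
      hIJ (Subtype.ext (eq_of_subset_of_card_le h (J.2.trans I.2.symm).le))
    obtain ⟨a, rfl⟩ : i ∈ Set.range (I.1.orderEmbOfFin I.2) := by rwa [range_orderEmbOfFin]
    rw [compound]
    refine (det_eq_zero_of_row_eq_zero a fun c => diagonal_apply_ne d ?_).ge
    exact fun h => hiJ (h ▸ orderEmbOfFin_mem _ _ _)

theorem compound_ctrb_diagonal_nonneg {n : ℕ} {d b : Fin n → ℝ} (hd : StrictMono d)
    (hd0 : ∀ i, 0 ≤ d i) (hb : ∀ i, 0 ≤ b i) (j r : ℕ) (I J) :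
    0 ≤ compound (ctrb (diagonal d) b j) r I J := by
  set f := I.1.orderEmbOfFin I.2
  set g := J.1.orderEmbOfFin J.2
  have hminor : (ctrb (diagonal d) b j).submatrix f g =
      of fun a c => b (f a) * genVandermonde (d ∘ f) (fun c => (g c : ℕ)) a c := by
    rw [ctrb_diagonal]; rfl
  rw [compound, hminor, det_mul_column]
  exact mul_nonneg (prod_nonneg fun a _ => hb _)
    (det_genVandermonde_nonneg (hd.comp f.strictMono) (fun a => hd0 _)
      fun c c' h => g.strictMono h)

/-- `G(z) = Σᵢ rᵢ/(z − pᵢ)` with distinct nonnegative poles `p₁ > … > pₙ ≥ 0` and positive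
residues admits the minimal symmetric realization `A = diag(pₙ, …, p₁)`,
`bᵢ = √(r_{n−i+1})`, `c = bᵀ`: its Markov parameters are `b ⬝ Aᵗ b = Σᵢ rᵢ pᵢᵗ`, it is
controllable, `A` is totally positive, and every truncated controllability matrix
`C_j(A,b)` is totally positive. -/
theorem relaxation_totally_positive_realization {n : ℕ} (p r : Fin n → ℝ)
    (hp_anti : StrictAnti p) (hp_nonneg : ∀ i, 0 ≤ p i) (hr : ∀ i, 0 < r i) :
    ∀ (A : Matrix (Fin n) (Fin n) ℝ) (b : Fin n → ℝ),
      A = Matrix.diagonal (fun i : Fin n => p i.rev) →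
      b = (fun i : Fin n => Real.sqrt (r i.rev)) →
      (∀ t : ℕ, b ⬝ᵥ (A ^ t).mulVec b = ∑ i, r i * p i ^ t) ∧
      (ctrb A b n).rank = n ∧
      (∀ j, 1 ≤ j → j ≤ n → ∀ I J, 0 ≤ compound A j I J) ∧
      (∀ j, 1 ≤ j → ∀ rr, 1 ≤ rr → rr ≤ min n j →
        ∀ I J, 0 ≤ compound (ctrb A b j) rr I J) := by
  rintro A b rfl rfl
  have hd : StrictMono fun i : Fin n => p i.rev := hp_anti.comp Fin.rev_strictAnti
  refine ⟨fun t => ?_, rank_ctrb_diagonal hd.injective fun i => (Real.sqrt_pos.2 (hr _)).ne',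
    fun j _ _ => compound_diagonal_nonneg (fun i => hp_nonneg _) j,
    fun j _ rr _ _ => compound_ctrb_diagonal_nonneg hd (fun i => hp_nonneg _)
      (fun i => Real.sqrt_nonneg _) j rr⟩
  simp only [dotProduct_diagonal_pow_mulVec, Real.sq_sqrt (hr _).le]
  exact Fintype.sum_equiv Fin.revPerm _ _ fun i => rfl
end
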